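/- arXiv:1104.4654 — 7 statements merged into one kernel-verified Lean document; each statement's English description precedes it below -/
import Mathlib

section
/- For a prime p and positive integers n, s, the greatest common divisor of the binomial coefficients C(p^n, 1), C(p^n, 2), ..., C(p^n, s) equals p^c where c = max(n - floor(log_p s), 0). -/
/-!
Kummer's theorem gives `v_p (C(p^n, k)) = n - v_p k` for `0 < k ≤ p^n`. Every `k ≤ s` has
`v_p k ≤ ⌊log_p s⌋`, so `p ^ (n - ⌊log_p s⌋)` divides the gcd. Conversely the gcd divides
`C(p^n, 1) = p^n`, so it is a power of `p`, and the term `k = p ^ min ⌊log_p s⌋ n` shows that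
this power is at most `n - ⌊log_p s⌋`.
-/

namespace Nat

variable {p n k s : ℕ}

theorem factorization_le_log_of_le (hp : 1 < p) (hk : k ≠ 0) (hks : k ≤ s) :
    k.factorization p ≤ log p s :=
  le_log_of_pow_le hp ((ordProj_le p hk).trans hks)

theorem factorization_choose_prime_pow_prime_pow {m : ℕ} (hp : p.Prime) (hmn : m ≤ n) :
    ((p ^ n).choose (p ^ m)).factorization p = n - m := by
  rw [factorization_choose_prime_pow hp (Nat.pow_le_pow_right hp.pos hmn)
    (pow_ne_zero m hp.ne_zero), factorization_pow_self hp]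

theorem prime_pow_sub_log_dvd_choose (hp : p.Prime) (hk : k ≠ 0) (hks : k ≤ s) :
    p ^ (n - log p s) ∣ (p ^ n).choose k := by
  rcases le_or_gt k (p ^ n) with hkn | hnk
  · rw [hp.pow_dvd_iff_le_factorization (choose_pos hkn).ne',
      factorization_choose_prime_pow hp hkn hk]
    have := factorization_le_log_of_le hp.one_lt hk hks
    omega
  · rw [choose_eq_zero_of_lt hnk]
    exact dvd_zero _

end Nat

open Nat in
theorem gcd_choose_prime_pow_general (p n s : ℕ) (hp : p.Prime) (hs : 0 < s) :
    (Finset.Icc 1 s).gcd (Nat.choose (p ^ n)) = p ^ (n - Nat.log p s) := by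
  have mem_Icc {k : ℕ} (hk : k ≠ 0) (hks : k ≤ s) : k ∈ Finset.Icc 1 s :=
    Finset.mem_Icc.2 ⟨one_le_iff_ne_zero.2 hk, hks⟩
  apply dvd_antisymm
  · have hdvd_pow : (Finset.Icc 1 s).gcd (choose (p ^ n)) ∣ p ^ n := by
      simpa only [choose_one_right] using
        Finset.gcd_dvd (f := choose (p ^ n)) (mem_Icc one_ne_zero hs)
    obtain ⟨a, -, hgcd⟩ := (dvd_prime_pow hp).1 hdvd_pow
    set m := min (log p s) n
    have hpm : p ^ m ≤ s := (Nat.pow_le_pow_right hp.pos (min_le_left _ _)).trans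
      (pow_log_le_self p hs.ne')
    have hdvd_choose : p ^ a ∣ (p ^ n).choose (p ^ m) :=
      hgcd ▸ Finset.gcd_dvd (mem_Icc (pow_ne_zero m hp.ne_zero) hpm)
    have hpmn : p ^ m ≤ p ^ n := Nat.pow_le_pow_right hp.pos (min_le_right _ _)
    rw [hp.pow_dvd_iff_le_factorization (choose_pos hpmn).ne',
      factorization_choose_prime_pow_prime_pow hp (min_le_right _ _)] at hdvd_choose
    rw [hgcd]
    exact pow_dvd_pow p (by omega)
  · refine Finset.dvd_gcd fun k hk => ?_
    obtain ⟨hk1, hks⟩ := Finset.mem_Icc.1 hk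
    exact prime_pow_sub_log_dvd_choose hp (one_le_iff_ne_zero.1 hk1) hks

/-- For a prime `p` and positive integers `n`, `s`, the gcd of the binomial coefficients
`C(p^n, 1), …, C(p^n, s)` equals `p ^ c` where `c = max (n - ⌊log_p s⌋) 0`
(natural subtraction). -/
theorem gcd_choose_prime_pow (p n s : ℕ) (hp : p.Prime) (hn : 0 < n) (hs : 0 < s) :
    (Finset.Icc 1 s).gcd (Nat.choose (p ^ n)) = p ^ (n - Nat.log p s) :=
  gcd_choose_prime_pow_general p n s hp hs
end

section
/- Kummer's theorem: for nonnegative integers a, b and a prime p, the exponent of p in the prime factorization of the binomial coefficient C(a+b, b) equals the number of carries that occur when adding a and b in base p. -/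
/-- Kummer's theorem: for a prime `p`, the exponent of `p` in `C(a+b, b)` equals the number
of carries occurring when adding `a` and `b` in base `p`, i.e. the number of `i ≥ 1` with
`a % p^i + b % p^i ≥ p^i`. -/
theorem kummer_carries (p a b : ℕ) (hp : p.Prime) :
    padicValNat p ((a + b).choose b) =
      ((Finset.Icc 1 (a + b)).filter (fun i => p ^ i ≤ a % p ^ i + b % p ^ i)).card := by
  haveI : Fact p.Prime := ⟨hp⟩
  have hb : Nat.log p (a + b) < a + b + 1 :=
    Nat.lt_succ_of_le (Nat.log_le_self _ _)
  have := padicValNat_choose' (p := p) (n := a) (k := b) (b := a + b + 1) hb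
  rw [this]
  congr 1
  rw [← Finset.Ico_add_one_right_eq_Icc]
  apply Finset.filter_congr
  intro i _
  simp [Nat.add_comm]
end

section
/- Let p be a prime, a a positive integer coprime to p, and n, s positive integers. Then the p-adic valuation of m(a·p^n, s) equals the p-adic valuation of m(p^n, s), where m(a,s) = gcd{ C(a,i) : 1 ≤ i ≤ s }. -/
/-!
If `p ^ n ∣ N` and `0 < t < p ^ n`, then `N - t` and `t` have the same `p`-adic valuation. Hence
for `j ≤ p ^ n` the valuation of `N (N - 1) ⋯ (N - j + 1) = j! C(N, j)`, and so that of `C(N, j)`,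
depends only on that of `N`: `C(a p ^ n, j)` and `C(p ^ n, j)` have the same valuation. The terms
with `j > p ^ n` do not matter: `C(p ^ n, j) = 0` for them, and when `s ≥ p ^ n` both gcds are
prime to `p`, since `C(p ^ n, p ^ n) = 1`.
-/

open Nat

theorem emultiplicity_sub_of_dvd_of_lt_pow {p n N j : ℕ} (hN : p ^ n ∣ N) (hj0 : j ≠ 0)
    (hjn : j < p ^ n) (hjN : j ≤ N) :
    emultiplicity p (N - j) = emultiplicity p j := by
  have hlt : emultiplicity (p : ℤ) j < emultiplicity (p : ℤ) N := by
    rw [Int.natCast_emultiplicity, Int.natCast_emultiplicity]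
    calc emultiplicity p j < n :=
          emultiplicity_lt_iff_not_dvd.2 fun h => (Nat.le_of_dvd (pos_of_ne_zero hj0) h).not_gt hjn
      _ ≤ emultiplicity p N := le_emultiplicity_of_pow_dvd hN
  rw [← Int.natCast_emultiplicity, Nat.cast_sub hjN, emultiplicity_sub_of_gt hlt,
    Int.natCast_emultiplicity]

theorem emultiplicity_descFactorial_eq_of_emultiplicity_eq {p n N N' : ℕ} (hp : p.Prime)
    (hN : p ^ n ∣ N) (hN' : p ^ n ∣ N') (hN0 : N ≠ 0) (hN'0 : N' ≠ 0)
    (h : emultiplicity p N = emultiplicity p N') :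
    ∀ j ≤ p ^ n, emultiplicity p (N.descFactorial j) = emultiplicity p (N'.descFactorial j)
  | 0, _ => by simp
  | j + 1, hj => by
    rw [descFactorial_succ, descFactorial_succ, hp.emultiplicity_mul, hp.emultiplicity_mul,
      emultiplicity_descFactorial_eq_of_emultiplicity_eq hp hN hN' hN0 hN'0 h j (by omega)]
    congr 1
    rcases Nat.eq_zero_or_pos j with rfl | hj0
    · simpa using h
    · have hjN : j ≤ N := (Nat.le_of_dvd (pos_of_ne_zero hN0) hN).trans' (by omega)
      have hjN' : j ≤ N' := (Nat.le_of_dvd (pos_of_ne_zero hN'0) hN').trans' (by omega)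
      rw [emultiplicity_sub_of_dvd_of_lt_pow hN hj0.ne' hj hjN,
        emultiplicity_sub_of_dvd_of_lt_pow hN' hj0.ne' hj hjN']

theorem emultiplicity_choose_eq_of_emultiplicity_eq {p n N N' j : ℕ} (hp : p.Prime)
    (hN : p ^ n ∣ N) (hN' : p ^ n ∣ N') (hN0 : N ≠ 0) (hN'0 : N' ≠ 0)
    (h : emultiplicity p N = emultiplicity p N') (hj : j ≤ p ^ n) :
    emultiplicity p (N.choose j) = emultiplicity p (N'.choose j) := by
  have hfac := emultiplicity_descFactorial_eq_of_emultiplicity_eq hp hN hN' hN0 hN'0 h j hj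
  rw [descFactorial_eq_factorial_mul_choose, descFactorial_eq_factorial_mul_choose,
    hp.emultiplicity_mul, hp.emultiplicity_mul] at hfac
  exact WithTop.add_left_cancel (finiteMultiplicity_iff_emultiplicity_ne_top.1
    (Nat.finiteMultiplicity_iff.2 ⟨hp.ne_one, factorial_pos j⟩)) hfac

theorem padicValNat_gcd_choose_mul_general (p a n s : ℕ) (hp : p.Prime) (ha : 0 < a)
    (hcop : Nat.Coprime a p) :
    padicValNat p ((Finset.Icc 1 s).gcd (Nat.choose (a * p ^ n))) =
      padicValNat p ((Finset.Icc 1 s).gcd (Nat.choose (p ^ n))) := by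
  have hval : emultiplicity p (a * p ^ n) = emultiplicity p (p ^ n) := by
    rw [hp.emultiplicity_mul, emultiplicity_eq_zero.2 (hp.coprime_iff_not_dvd.1 hcop.symm),
      zero_add]
  have hterm (i : ℕ) (hi : i ≤ p ^ n) (e : ℕ) :
      p ^ e ∣ (a * p ^ n).choose i ↔ p ^ e ∣ (p ^ n).choose i :=
    emultiplicity_eq_emultiplicity_iff.1 (emultiplicity_choose_eq_of_emultiplicity_eq hp
      (dvd_mul_left _ _) dvd_rfl (mul_pos ha (pow_pos hp.pos n)).ne' (pow_pos hp.pos n).ne'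
      hval hi) e
  rw [← Nat.toNat_emultiplicity, ← Nat.toNat_emultiplicity]
  congr 1
  refine emultiplicity_eq_emultiplicity_iff.2 fun e => ?_
  simp only [Finset.dvd_gcd_iff, Finset.mem_Icc]
  refine ⟨fun h i hi => ?_, fun h i hi => ?_⟩ <;> rcases le_or_gt i (p ^ n) with hin | hin
  · exact (hterm i hin e).1 (h i hi)
  · simp [choose_eq_zero_of_lt hin]
  · exact (hterm i hin e).2 (h i hi)
  · have hone := h (p ^ n) ⟨one_le_pow _ _ hp.pos, hin.le.trans hi.2⟩
    rw [choose_self] at hone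
    exact hone.trans (one_dvd _)

/-- For `p` prime, `a` coprime to `p`, and `n`, `s` positive, the `p`-adic valuation of
`m (a * p^n) s` equals that of `m (p^n) s`, where `m a s = gcd {C(a,i) : 1 ≤ i ≤ s}`. -/
theorem padicValNat_gcd_choose_mul (p a n s : ℕ) (hp : p.Prime) (ha : 0 < a)
    (hcop : Nat.Coprime a p) (hn : 0 < n) (hs : 0 < s) :
    padicValNat p ((Finset.Icc 1 s).gcd (Nat.choose (a * p ^ n))) =
      padicValNat p ((Finset.Icc 1 s).gcd (Nat.choose (p ^ n))) :=
  padicValNat_gcd_choose_mul_general p a n s hp ha hcop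
end

section
/- Let p be a prime, n a positive integer, k ≤ p^n a positive integer, and a a positive integer coprime to p. Then for every r with 0 < r < k, the p-adic valuation of a·p^n − r equals the p-adic valuation of p^n − r, and v_p(a·p^n) = n = v_p(p^n); consequently v_p(C(a·p^n, k)) = v_p(C(p^n, k)). -/
lemma padicValNat_eq_of_dvd_of_not_dvd {p v m : ℕ} (hp : p.Prime) (hm : m ≠ 0)
    (h1 : p ^ v ∣ m) (h2 : ¬ p ^ (v + 1) ∣ m) : padicValNat p m = v := by
  have hf := Nat.factorization_def m hp
  have l1 : v ≤ m.factorization p := (Nat.Prime.pow_dvd_iff_le_factorization hp hm).mp h1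
  have l2 : ¬ v + 1 ≤ m.factorization p := fun h =>
    h2 ((Nat.Prime.pow_dvd_iff_le_factorization hp hm).mpr h)
  omega

/-- Let `p` be prime, `n` positive, `1 ≤ k ≤ p^n`, and `a` positive coprime to `p`. Then
for `0 < r < k` the `p`-adic valuations of `a*p^n - r` and `p^n - r` agree, `v_p (a*p^n) = n`,
and consequently `v_p (C(a*p^n, k)) = v_p (C(p^n, k))`. -/
theorem padicValNat_choose_mul_prime_pow (p a n k : ℕ) (hp : p.Prime) (hn : 0 < n)
    (hk : 0 < k) (hkn : k ≤ p ^ n) (ha : 0 < a) (hcop : Nat.Coprime a p) :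
    (∀ r : ℕ, 0 < r → r < k →
        padicValNat p (a * p ^ n - r) = padicValNat p (p ^ n - r)) ∧
      padicValNat p (a * p ^ n) = n ∧
      padicValNat p ((a * p ^ n).choose k) = padicValNat p ((p ^ n).choose k) := by
  haveI : Fact p.Prime := ⟨hp⟩
  have hpn : 0 < p ^ n := Nat.pow_pos (n := n) hp.pos
  have hle : p ^ n ≤ a * p ^ n := Nat.le_mul_of_pos_left _ ha
  -- key : valuation of c * p^n - r for 0 < r < p^n
  have key : ∀ c r : ℕ, 0 < c → 0 < r → r < p ^ n →
      padicValNat p (c * p ^ n - r) = padicValNat p r := by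
    intro c r hc hr hrn
    set v := padicValNat p r with hv
    have hpv : p ^ v ∣ r := pow_padicValNat_dvd
    have hvn : v < n := by
      have : p ^ v ≤ r := Nat.le_of_dvd hr hpv
      have := lt_of_le_of_lt this hrn
      exact (Nat.pow_lt_pow_iff_right hp.one_lt).mp this
    have hm : c * p ^ n - r ≠ 0 := by
      have : p ^ n ≤ c * p ^ n := Nat.le_mul_of_pos_left _ hc
      omega
    apply padicValNat_eq_of_dvd_of_not_dvd hp hm
    · exact Nat.dvd_sub (Dvd.dvd.mul_left (pow_dvd_pow p hvn.le) c) hpv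
    · intro hdvd
      have hdn : p ^ (v + 1) ∣ c * p ^ n := Dvd.dvd.mul_left (pow_dvd_pow p hvn) c
      have : p ^ (v + 1) ∣ r := by
        have := Nat.dvd_sub hdn hdvd
        rwa [Nat.sub_sub_self (le_trans hrn.le (Nat.le_mul_of_pos_left _ hc))] at this
      exact pow_succ_padicValNat_not_dvd hr.ne' this
  have part1 : ∀ r : ℕ, 0 < r → r < k →
      padicValNat p (a * p ^ n - r) = padicValNat p (p ^ n - r) := by
    intro r hr hrk
    rw [key a r ha hr (lt_of_lt_of_le hrk hkn)]
    have h := key 1 r one_pos hr (lt_of_lt_of_le hrk hkn)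
    rw [one_mul] at h
    exact h.symm
  have part2 : padicValNat p (a * p ^ n) = n := by
    rw [padicValNat.mul ha.ne' hpn.ne', padicValNat.prime_pow,
      padicValNat.eq_zero_of_not_dvd (hp.coprime_iff_not_dvd.mp hcop.symm), zero_add]
  refine ⟨part1, part2, ?_⟩
  -- descending factorial valuations agree
  have hdesc : ∀ j, j ≤ k → padicValNat p ((a * p ^ n).descFactorial j)
      = padicValNat p ((p ^ n).descFactorial j) := by
    intro j hj
    induction j with
    | zero => simp
    | succ i ih =>
      have hik : i < p ^ n := lt_of_lt_of_le (Nat.lt_of_succ_le hj) hkn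
      have d1 : (a * p ^ n).descFactorial i ≠ 0 := by
        rw [Ne, Nat.descFactorial_eq_zero_iff_lt]; omega
      have d2 : (p ^ n).descFactorial i ≠ 0 := by
        rw [Ne, Nat.descFactorial_eq_zero_iff_lt]; omega
      have m1 : a * p ^ n - i ≠ 0 := by omega
      have m2 : p ^ n - i ≠ 0 := by omega
      rw [Nat.descFactorial_succ, Nat.descFactorial_succ, padicValNat.mul m1 d1,
        padicValNat.mul m2 d2, ih (by omega)]
      congr 1
      rcases Nat.eq_zero_or_pos i with hi0 | hi0
      · subst hi0
        simp only [Nat.sub_zero]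
        rw [part2, padicValNat.prime_pow]
      · rw [key a i ha hi0 hik]
        have h := key 1 i one_pos hi0 hik
        rw [one_mul] at h
        exact h.symm
  have hc1 : (a * p ^ n).choose k ≠ 0 := (Nat.choose_pos (le_trans hkn hle)).ne'
  have hc2 : (p ^ n).choose k ≠ 0 := (Nat.choose_pos hkn).ne'
  have e1 := Nat.descFactorial_eq_factorial_mul_choose (a * p ^ n) k
  have e2 := Nat.descFactorial_eq_factorial_mul_choose (p ^ n) k
  have := hdesc k le_rfl
  rw [e1, e2, padicValNat.mul k.factorial_ne_zero hc1,
    padicValNat.mul k.factorial_ne_zero hc2] at this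
  omega
end

section
/- For a positive integer a with prime factorization a = p_1^{n_1} · ... · p_r^{n_r} and a positive integer s, the gcd m(a,s) of the binomial coefficients C(a,1),...,C(a,s) equals the product over i of p_i^{max(n_i − floor(log_{p_i} s), 0)}. Equivalently, for every prime p, v_p(m(a,s)) = max(v_p(a) − floor(log_p s), 0). -/
open Nat Finset

/-- Kummer computation: if `j ≤ v_p a` then `v_p (C(a, p^j)) = v_p a - j`. -/
lemma padicValNat_choose_pow {p a j : ℕ} [hp : Fact p.Prime] (ha : a ≠ 0)
    (hj : j ≤ padicValNat p a) :
    padicValNat p (a.choose (p ^ j)) = padicValNat p a - j := by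
  have hp1 : 1 < p := hp.out.one_lt
  set n := padicValNat p a with hn
  have hpn : p ^ n ∣ a := pow_padicValNat_dvd
  have hpja : p ^ j ≤ a :=
    le_trans (Nat.pow_le_pow_right (by omega) hj) (Nat.le_of_dvd ha.bot_lt hpn)
  have hlog : n ≤ Nat.log p a := Nat.le_log_of_pow_le hp1 (Nat.le_of_dvd ha.bot_lt hpn)
  rw [padicValNat_choose (b := Nat.log p a + 1) hpja (lt_succ_self _)]
  have hset : ((Finset.Ico 1 (Nat.log p a + 1)).filter
      fun i => p ^ i ≤ p ^ j % p ^ i + (a - p ^ j) % p ^ i) = Finset.Icc (j + 1) n := by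
    ext i
    simp only [Finset.mem_filter, Finset.mem_Ico, Finset.mem_Icc]
    constructor
    · rintro ⟨⟨hi1, hib⟩, hcond⟩
      by_cases hij : i ≤ j
      · exfalso
        have h0i : 0 < p ^ i := pow_pos (by omega) i
        have h1 : p ^ j % p ^ i = 0 := Nat.eq_zero_of_dvd_of_lt (pow_dvd_pow p hij) |> fun _ => Nat.mod_eq_zero_of_dvd (pow_dvd_pow p hij)
        have hja : p ^ j ∣ a := (pow_dvd_pow p hj).trans hpn
        have h2 : (a - p ^ j) % p ^ i = 0 := Nat.mod_eq_zero_of_dvd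
          (Nat.dvd_sub ((pow_dvd_pow p (hij.trans hj)).trans hpn) (pow_dvd_pow p hij))
        omega
      · push_neg at hij
        have hmodj : p ^ j % p ^ i = p ^ j :=
          Nat.mod_eq_of_lt (Nat.pow_lt_pow_right hp1 hij)
        set r := (a - p ^ j) % p ^ i with hr
        have hpij : p ^ j ∣ p ^ i := pow_dvd_pow p hij.le
        have hja : p ^ j ∣ a := (pow_dvd_pow p hj).trans hpn
        have hjr : p ^ j ∣ r := (Nat.dvd_mod_iff hpij).2 (Nat.dvd_sub hja dvd_rfl)
        have hrlt : r < p ^ i := Nat.mod_lt _ (pow_pos (by omega) i)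
        have hjlt : p ^ j < p ^ i := Nat.pow_lt_pow_right hp1 hij
        have hkey : r = p ^ i - p ^ j := by
          have h1 : p ^ j ∣ p ^ i - r := Nat.dvd_sub hpij hjr
          have h2 : 0 < p ^ i - r := by omega
          have h3 : p ^ j ≤ p ^ i - r := Nat.le_of_dvd h2 h1
          omega
        have hia : p ^ i ∣ a := by
          have hsplit : a = (a - p ^ j) + p ^ j := by omega
          have : a % p ^ i = ((a - p ^ j) % p ^ i + p ^ j % p ^ i) % p ^ i := by
            rw [← Nat.add_mod, ← hsplit]
          rw [← hr, hkey, hmodj] at this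
          have hz : (p ^ i - p ^ j + p ^ j) % p ^ i = 0 := by
            rw [Nat.sub_add_cancel hjlt.le, Nat.mod_self]
          exact Nat.dvd_of_mod_eq_zero (this.trans hz)
        have hin : i ≤ n := by
          by_contra h
          exact pow_succ_padicValNat_not_dvd (p := p) ha
            ((pow_dvd_pow p (by omega)).trans hia)
        exact ⟨by omega, hin⟩
    · rintro ⟨h1, h2⟩
      have hia : p ^ i ∣ a := (pow_dvd_pow p h2).trans hpn
      have hjlt : p ^ j < p ^ i := Nat.pow_lt_pow_right hp1 (by omega)
      have hmodj : p ^ j % p ^ i = p ^ j := Nat.mod_eq_of_lt hjlt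
      obtain ⟨q, hq⟩ := hia
      have hq0 : q ≠ 0 := by rintro rfl; simp at hq; omega
      obtain ⟨q', rfl⟩ : ∃ q', q = q' + 1 := ⟨q - 1, by omega⟩
      have hsub : a - p ^ j = p ^ i - p ^ j + p ^ i * q' := by
        rw [hq, Nat.mul_add, Nat.mul_one]; omega
      have hmodr : (a - p ^ j) % p ^ i = p ^ i - p ^ j := by
        rw [hsub, Nat.add_mul_mod_self_left]
        have h0j : 0 < p ^ j := pow_pos (by omega) j
        exact Nat.mod_eq_of_lt (by omega)
      refine ⟨⟨by omega, by omega⟩, ?_⟩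
      rw [hmodj, hmodr]
      omega
  rw [hset, Nat.card_Icc]
  omega

/-- For positive integers `a`, `s` and every prime `p`, the `p`-adic valuation of
`m a s = gcd {C(a,i) : 1 ≤ i ≤ s}` is `max (v_p a - ⌊log_p s⌋) 0` (natural subtraction). -/
theorem padicValNat_gcd_choose (a s : ℕ) (ha : 0 < a) (hs : 0 < s) :
    ∀ p : ℕ, p.Prime →
      padicValNat p ((Finset.Icc 1 s).gcd (Nat.choose a)) =
        padicValNat p a - Nat.log p s := by
  intro p hpp
  haveI : Fact p.Prime := ⟨hpp⟩
  have hp1 : 1 < p := hpp.one_lt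
  set n := padicValNat p a with hn
  set L := Nat.log p s with hL
  set g := (Finset.Icc 1 s).gcd (Nat.choose a) with hg
  have h1s : (1 : ℕ) ∈ Finset.Icc 1 s := Finset.mem_Icc.2 ⟨le_refl 1, hs⟩
  have hga : g ∣ a := by
    have := Finset.gcd_dvd (f := Nat.choose a) h1s
    rwa [Nat.choose_one_right] at this
  have hg0 : g ≠ 0 := by
    rintro h; rw [h] at hga; exact absurd (Nat.eq_zero_of_zero_dvd hga) (by omega)
  -- lower bound
  have hlow : n - L ≤ padicValNat p g := by
    rw [← padicValNat_dvd_iff_le hg0]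
    rw [hg]
    refine Finset.dvd_gcd fun i hi => ?_
    rw [Finset.mem_Icc] at hi
    by_cases hia : i ≤ a
    · have hc0 : a.choose i ≠ 0 := (Nat.choose_pos hia).ne'
      have hvi : padicValNat p i ≤ L :=
        Nat.le_log_of_pow_le hp1
          (le_trans (Nat.le_of_dvd (by omega) pow_padicValNat_dvd) hi.2)
      have key : n ≤ padicValNat p i + padicValNat p (a.choose i) := by
        have hdvd : a ∣ i * a.choose i := by
          obtain ⟨a', rfl⟩ : ∃ a', a = a' + 1 := ⟨a - 1, by omega⟩
          obtain ⟨i', rfl⟩ : ∃ i', i = i' + 1 := ⟨i - 1, by omega⟩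
          rw [mul_comm, ← Nat.add_one_mul_choose_eq]
          exact Dvd.intro _ rfl
        have h2 := (pow_padicValNat_dvd (p := p) (n := a)).trans hdvd
        have h3 := (padicValNat_dvd_iff_le (mul_ne_zero (by omega) hc0)).1 h2
        rwa [padicValNat.mul (by omega) hc0] at h3
      rw [padicValNat_dvd_iff_le hc0]
      omega
    · rw [Nat.choose_eq_zero_of_lt (by omega)]
      exact dvd_zero _
  -- upper bound
  set j := min n L with hj
  have hpLs : p ^ L ≤ s := Nat.pow_log_le_self p (by omega)
  have hpj_mem : p ^ j ∈ Finset.Icc 1 s := Finset.mem_Icc.2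
    ⟨Nat.one_le_pow _ _ (by omega),
     le_trans (Nat.pow_le_pow_right (by omega) (min_le_right _ _)) hpLs⟩
  have hpja : p ^ j ≤ a := le_trans
    (Nat.pow_le_pow_right (by omega) (min_le_left _ _))
    (Nat.le_of_dvd ha pow_padicValNat_dvd)
  have hc0 : a.choose (p ^ j) ≠ 0 := (Nat.choose_pos hpja).ne'
  have hhigh : padicValNat p g ≤ n - j := by
    have hgd : g ∣ a.choose (p ^ j) := Finset.gcd_dvd (f := Nat.choose a) hpj_mem
    have h1 := (padicValNat_dvd_iff_le hc0).1 ((pow_padicValNat_dvd (p := p) (n := g)).trans hgd)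
    rwa [padicValNat_choose_pow (by omega) (min_le_left _ _)] at h1
  omega
end

section
/- Let b, a, s be positive integers and define n(b,s) = ∏_p p^{v_p(b) + floor(log_p s)}, the product taken over primes p dividing b. If b divides m(a,s) = gcd{C(a,i) : 1 ≤ i ≤ s}, then n(b,s) divides a. -/
/-!
Fix a prime `p ∣ b` and put `t = v_p(a)`, `j = ⌊log_p s⌋`, `r = min j t`. Writing `a = p^r m`,
Kummer's theorem in digit-sum form gives `v_p C(a, p^r) = v_p(m) = t - r`, and `p^r ≤ s`, so
`1 ≤ v_p(b) ≤ t - r`. Hence `r < t`, i.e. `r = j`, and `v_p(b) + j ≤ t`.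
-/

open Nat

theorem digits_sum_base_pow_mul {b : ℕ} (hb : 1 < b) (k n : ℕ) :
    (b.digits (b ^ k * n)).sum = (b.digits n).sum := by
  rcases n.eq_zero_or_pos with rfl | hn
  · simp
  · simp [digits_base_pow_mul hb hn]

theorem padicValNat_pow_mul_choose_pow {p : ℕ} [hp : Fact p.Prime] (k : ℕ) {m : ℕ} (hm : m ≠ 0) :
    padicValNat p ((p ^ k * m).choose (p ^ k)) = padicValNat p m := by
  have hp1 := hp.out.one_lt
  -- `p - 1` times either side is `1 + s(m - 1) - s(m)`, where `s` is the base-`p` digit sum.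
  have hchoose := sub_one_mul_padicValNat_choose_eq_sub_sum_digits (p := p)
    (Nat.le_mul_of_pos_right (p ^ k) (pos_of_ne_zero hm))
  have hone : (p.digits (p ^ k)).sum = 1 := by
    simpa [digits_of_lt p 1 one_ne_zero hp1] using digits_sum_base_pow_mul hp1 k 1
  rw [← Nat.mul_sub_one, digits_sum_base_pow_mul hp1, digits_sum_base_pow_mul hp1, hone]
    at hchoose
  have hfact : padicValNat p m ! = padicValNat p m + padicValNat p (m - 1)! := by
    rw [← Nat.mul_factorial_pred hm, padicValNat.mul hm (factorial_ne_zero _)]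
  have hm_digits := sub_one_mul_padicValNat_factorial (p := p) m
  have hpred_digits := sub_one_mul_padicValNat_factorial (p := p) (m - 1)
  rw [hfact, mul_add] at hm_digits
  have hm_le := digit_sum_le p m
  have hpred_le := digit_sum_le p (m - 1)
  refine Nat.eq_of_mul_eq_mul_left (Nat.sub_pos_of_lt hp1) ?_
  omega

theorem factorization_choose_prime_pow_add {p a r : ℕ} (hp : p.Prime) (ha : a ≠ 0)
    (hr : r ≤ a.factorization p) :
    (a.choose (p ^ r)).factorization p + r = a.factorization p := by
  have : Fact p.Prime := ⟨hp⟩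
  obtain ⟨m, rfl⟩ := (hp.pow_dvd_iff_le_factorization ha).2 hr
  have hm : m ≠ 0 := right_ne_zero_of_mul ha
  rw [factorization_def _ hp, factorization_def _ hp, padicValNat_pow_mul_choose_pow r hm,
    padicValNat.mul (pow_ne_zero _ hp.ne_zero) hm, padicValNat.prime_pow, add_comm]

theorem factorization_add_log_le_of_dvd_choose {a b s p : ℕ} (ha : a ≠ 0) (hs : s ≠ 0)
    (hpf : p ∈ b.primeFactors) (hb : ∀ k ∈ Finset.Icc 1 s, b ∣ a.choose k) :
    b.factorization p + log p s ≤ a.factorization p := by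
  obtain ⟨hp, hpb, hb0⟩ := mem_primeFactors.1 hpf
  set r := min (log p s) (a.factorization p) with hr
  have hr_le : p ^ r ≤ s :=
    (Nat.pow_le_pow_right hp.pos (min_le_left _ _)).trans (pow_log_le_self p hs)
  have hr_dvd : p ^ r ∣ a := (hp.pow_dvd_iff_le_factorization ha).2 (min_le_right _ _)
  have hchoose : a.choose (p ^ r) ≠ 0 := (choose_pos (le_of_dvd (pos_of_ne_zero ha) hr_dvd)).ne'
  have hb_le : b.factorization p ≤ (a.choose (p ^ r)).factorization p :=
    (factorization_le_iff_dvd hb0 hchoose).2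
      (hb _ (Finset.mem_Icc.2 ⟨one_le_pow _ _ hp.pos, hr_le⟩)) p
  have hb_pos : 0 < b.factorization p := hp.factorization_pos_of_dvd hb0 hpb
  have hkey : (a.choose (p ^ r)).factorization p + r = a.factorization p :=
    factorization_choose_prime_pow_add hp ha (min_le_right _ _)
  omega

theorem prod_pow_dvd_of_subset_primeFactors {n : ℕ} {S : Finset ℕ} {e : ℕ → ℕ} (hn : n ≠ 0)
    (hS : S ⊆ n.primeFactors) (he : ∀ p ∈ S, e p ≤ n.factorization p) :
    ∏ p ∈ S, p ^ e p ∣ n :=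
  calc ∏ p ∈ S, p ^ e p
      ∣ ∏ p ∈ S, p ^ n.factorization p :=
        Finset.prod_dvd_prod_of_dvd _ _ fun p hp => pow_dvd_pow p (he p hp)
    _ ∣ ∏ p ∈ n.primeFactors, p ^ n.factorization p := Finset.prod_dvd_prod_of_subset _ _ _ hS
    _ = n := prod_factorization_pow_eq_self hn

theorem n_b_s_dvd_of_dvd_gcd_choose_general (b a s : ℕ) (hs : 0 < s)
    (hdvd : b ∣ (Finset.Icc 1 s).gcd (Nat.choose a)) :
    (∏ p ∈ b.primeFactors, p ^ (b.factorization p + Nat.log p s)) ∣ a := by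
  rcases eq_or_ne a 0 with rfl | ha
  · exact dvd_zero _
  have hchoose : ∀ k ∈ Finset.Icc 1 s, b ∣ a.choose k := fun k hk =>
    hdvd.trans (Finset.gcd_dvd hk)
  have hba : b ∣ a := by simpa using hchoose 1 (Finset.mem_Icc.2 ⟨le_rfl, hs⟩)
  exact prod_pow_dvd_of_subset_primeFactors ha (primeFactors_mono hba ha) fun p hp =>
    factorization_add_log_le_of_dvd_choose ha hs.ne' hp hchoose

/-- If `b` divides `m a s = gcd {C(a,i) : 1 ≤ i ≤ s}`, then
`n(b,s) = ∏_{p ∣ b prime} p ^ (v_p b + ⌊log_p s⌋)` divides `a`. -/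
theorem n_b_s_dvd_of_dvd_gcd_choose (b a s : ℕ) (hb : 0 < b) (ha : 0 < a) (hs : 0 < s)
    (hdvd : b ∣ (Finset.Icc 1 s).gcd (Nat.choose a)) :
    (∏ p ∈ b.primeFactors, p ^ (b.factorization p + Nat.log p s)) ∣ a :=
  n_b_s_dvd_of_dvd_gcd_choose_general b a s hs hdvd
end

section
/- Let r ≥ 2 and a ≥ 3 be integers, and suppose a class α in a cohomology ring satisfies: α^j has additive order r for all j with 1 ≤ j ≤ floor((a−1)/2). If r divides m(N, floor((a−1)/2)) = gcd{C(N,i) : 1 ≤ i ≤ floor((a−1)/2)} for a positive integer N, then n(r, floor((a−1)/2)) divides N, where n(b,s) = ∏_{p | b} p^{v_p(b)+floor(log_p s)}. -/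
/-!
Fix a prime `p` with `p ^ k ∥ r`, `k ≥ 1`. If `p ^ e ∣ N`, Lucas' theorem gives
`C(N - 1, p ^ e - 1) ≡ 1 [MOD p]`, so the absorption identity
`N * C(N - 1, p ^ e - 1) = C(N, p ^ e) * p ^ e` turns `p ^ k ∣ C(N, p ^ e)` into
`p ^ (k + e) ∣ N`. Since `r ∣ C(N, p ^ e)` for every `p ^ e ≤ s`, climbing
`e = 0, 1, …, ⌊log_p s⌋` yields `p ^ (k + ⌊log_p s⌋) ∣ N`.
-/

namespace Nat

theorem choose_mul_sub_one_modEq {p q k : ℕ} [Fact p.Prime] (hq : q ≠ 0) (hk : k ≠ 0) :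
    choose (p * q - 1) (p * k - 1) ≡ choose (q - 1) (k - 1) [MOD p] := by
  have hp : 0 < p := Fact.out (p := p.Prime) |>.pos
  have digits : ∀ m ≠ 0, (p * m - 1) % p = p - 1 ∧ (p * m - 1) / p = m - 1 := by
    intro m hm
    have : p * m - 1 = p - 1 + p * (m - 1) := by
      cases m with
      | zero => contradiction
      | succ m => rw [Nat.mul_succ, Nat.add_sub_cancel]; omega
    rw [this, Nat.add_mul_mod_self_left, Nat.add_mul_div_left _ _ hp,
      Nat.mod_eq_of_lt (by omega), Nat.div_eq_of_lt (by omega)]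
    simp
  obtain ⟨hq_mod, hq_div⟩ := digits q hq
  obtain ⟨hk_mod, hk_div⟩ := digits k hk
  have lucas := Choose.choose_modEq_choose_mod_mul_choose_div_nat
    (n := p * q - 1) (k := p * k - 1) (p := p)
  rwa [hq_mod, hq_div, hk_mod, hk_div, choose_self, one_mul] at lucas

theorem choose_pow_mul_sub_one_modEq_one {p m : ℕ} [Fact p.Prime] (hm : m ≠ 0) (e : ℕ) :
    choose (p ^ e * m - 1) (p ^ e - 1) ≡ 1 [MOD p] := by
  induction e with
  | zero => simp [ModEq.refl]
  | succ e ih =>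
    have hp : p ≠ 0 := Fact.out (p := p.Prime) |>.ne_zero
    rw [pow_succ', mul_assoc]
    exact (choose_mul_sub_one_modEq (by positivity) (by positivity)).trans
      (by simpa using ih)

theorem Prime.pow_add_dvd_of_pow_dvd_choose {p N e k : ℕ} (hp : p.Prime) (he : p ^ e ∣ N)
    (hk : p ^ k ∣ choose N (p ^ e)) : p ^ (k + e) ∣ N := by
  have := Fact.mk hp
  obtain ⟨m, rfl⟩ := he
  rcases eq_or_ne m 0 with rfl | hm
  · simp
  have hpe : p ^ e ≠ 0 := pow_ne_zero _ hp.ne_zero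
  have absorb := add_one_mul_choose_eq (p ^ e * m - 1) (p ^ e - 1)
  rw [Nat.sub_add_cancel (one_le_iff_ne_zero.2 (mul_ne_zero hpe hm)),
    Nat.sub_add_cancel (one_le_iff_ne_zero.2 hpe)] at absorb
  have hcop : Coprime (p ^ (k + e)) (choose (p ^ e * m - 1) (p ^ e - 1)) := by
    refine Coprime.pow_left _ ((Prime.coprime_iff_not_dvd hp).2 fun hdvd => hp.not_dvd_one ?_)
    exact ((choose_pow_mul_sub_one_modEq_one hm e).dvd_iff dvd_rfl).1 hdvd
  refine hcop.dvd_of_dvd_mul_right ?_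
  rw [absorb, pow_add]
  exact mul_dvd_mul hk dvd_rfl

theorem Prime.pow_add_dvd_of_forall_pow_dvd_choose {p N k : ℕ} (hp : p.Prime) (hk : k ≠ 0)
    (L : ℕ) (h : ∀ e ≤ L, p ^ k ∣ choose N (p ^ e)) : p ^ (k + L) ∣ N := by
  induction L with
  | zero => simpa using h 0 le_rfl
  | succ L ih =>
    have hkL : p ^ (k + L) ∣ N := ih fun e he => h e (by omega)
    exact hp.pow_add_dvd_of_pow_dvd_choose ((pow_dvd_pow p (by omega)).trans hkL) (h _ le_rfl)

theorem prod_pow_dvd_of_forall_pow_dvd {S : Finset ℕ} {f : ℕ → ℕ} {N : ℕ}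
    (hS : ∀ p ∈ S, p.Prime) (h : ∀ p ∈ S, p ^ f p ∣ N) : ∏ p ∈ S, p ^ f p ∣ N := by
  have : ((∏ p ∈ S, p ^ f p : ℕ) : ℤ) ∣ N := by
    push_cast
    refine Finset.prod_dvd_of_coprime (fun p hp q hq hpq => ?_) fun p hp => ?_
    · exact Nat.isCoprime_iff_coprime.2 (coprime_pow_primes _ _ (hS p hp) (hS q hq) hpq)
    · exact_mod_cast h p hp
  exact_mod_cast this

end Nat

theorem index_lower_bound_general (r a N : ℕ) (ha : 3 ≤ a)
    (hdvd : r ∣ (Finset.Icc 1 ((a - 1) / 2)).gcd (Nat.choose N)) :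
    (∏ p ∈ r.primeFactors, p ^ (r.factorization p + Nat.log p ((a - 1) / 2))) ∣ N := by
  have hs : (a - 1) / 2 ≠ 0 := by omega
  refine Nat.prod_pow_dvd_of_forall_pow_dvd (fun p => Nat.prime_of_mem_primeFactors) fun p hpr => ?_
  have hp := Nat.prime_of_mem_primeFactors hpr
  have hk : r.factorization p ≠ 0 := by
    rwa [← Finsupp.mem_support_iff, Nat.support_factorization]
  refine hp.pow_add_dvd_of_forall_pow_dvd_choose hk _ fun e he => ?_
  have he_mem : p ^ e ∈ Finset.Icc 1 ((a - 1) / 2) :=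
    Finset.mem_Icc.2 ⟨Nat.one_le_pow _ _ hp.pos,
      (Nat.pow_le_pow_right hp.pos he).trans (Nat.pow_log_le_self p hs)⟩
  exact (Nat.ordProj_dvd r p).trans (hdvd.trans (Finset.gcd_dvd he_mem))

/-- Arithmetic core of the lower bound on the index in Example 5.8: let `r ≥ 2`, `a ≥ 3`,
and suppose the class `α` (in a cohomology ring `R`) satisfies that `α^j` has additive order
`r` for `1 ≤ j ≤ ⌊(a-1)/2⌋`. If `r` divides `m(N, ⌊(a-1)/2⌋) = gcd {C(N,i)}`, then
`n(r, ⌊(a-1)/2⌋) = ∏_{p ∣ r prime} p^(v_p r + ⌊log_p ⌊(a-1)/2⌋⌋)` divides `N`. -/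
theorem index_lower_bound (r a N : ℕ) (hr : 2 ≤ r) (ha : 3 ≤ a) (hN : 0 < N)
    (R : Type*) [CommRing R] (α : R)
    (hα : ∀ j : ℕ, 1 ≤ j → j ≤ (a - 1) / 2 → addOrderOf (α ^ j) = r)
    (hdvd : r ∣ (Finset.Icc 1 ((a - 1) / 2)).gcd (Nat.choose N)) :
    (∏ p ∈ r.primeFactors, p ^ (r.factorization p + Nat.log p ((a - 1) / 2))) ∣ N :=
  index_lower_bound_general r a N ha hdvd
end
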